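/- arXiv:2510.00748 — 3 statements merged into one kernel-verified Lean document; each statement's English description precedes it below -/
import Mathlib

section
/- Let X₁,…,X_{2n} be i.i.d. standard Gaussian random variables and define Z_n := 2·(Σ_{i=1}^n X_i)·(Σ_{j=n+1}^{2n} X_j). Then Z_n has the same distribution as 2n·X₁X₂; in particular Var(Z_n) = 4n² and Z_n/√(Var Z_n) converges in distribution to X₁X₂ (not Gaussian). -/
open MeasureTheory ProbabilityTheory Filter Finset Real

lemma gauss_pdf_conv {a b : NNReal} (ha : a ≠ 0) (hb : b ≠ 0) (z x : ℝ) :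
    gaussianPDFReal 0 a x * gaussianPDFReal 0 b (z - x)
      = gaussianPDFReal 0 (a + b) z * gaussianPDFReal ((a : ℝ) * z / ((a : ℝ) + b)) (a * b / (a + b)) x := by
  have ha' : (0:ℝ) < a := lt_of_le_of_ne a.coe_nonneg (by exact_mod_cast Ne.symm ha)
  have hb' : (0:ℝ) < b := lt_of_le_of_ne b.coe_nonneg (by exact_mod_cast Ne.symm hb)
  have hab : (0:ℝ) < (a:ℝ) + b := by linarith
  have hcoe : ((a * b / (a + b) : NNReal) : ℝ) = (a:ℝ) * b / ((a:ℝ) + b) := by push_cast; ring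
  simp only [gaussianPDFReal, sub_zero, hcoe, NNReal.coe_add]
  rw [mul_mul_mul_comm, mul_mul_mul_comm ((√(2 * π * ((a:ℝ)+b)))⁻¹)]
  congr 1
  · rw [← mul_inv, ← mul_inv, ← Real.sqrt_mul (by positivity), ← Real.sqrt_mul (by positivity)]
    congr 1
    field_simp
  · rw [← Real.exp_add, ← Real.exp_add]
    congr 1
    field_simp
    ring

lemma gauss_pdf_prod_meas {b : NNReal} :
    Measurable (fun q : ℝ × ℝ => gaussianPDF q.1 b q.2) := by
  simp only [gaussianPDF, gaussianPDFReal]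
  apply Measurable.ennreal_ofReal
  measurability

lemma gauss_conv {a b : NNReal} (ha : a ≠ 0) (hb : b ≠ 0) :
    ((gaussianReal 0 a).prod (gaussianReal 0 b)).map (fun p : ℝ × ℝ => p.1 + p.2)
      = gaussianReal 0 (a + b) := by
  have hab : a + b ≠ 0 := by simp [ha]
  have hc : a * b / (a + b) ≠ 0 := by
    refine div_ne_zero (mul_ne_zero ha hb) hab
  ext s hs
  rw [Measure.map_apply (show Measurable (fun p : ℝ × ℝ => p.1 + p.2) from measurable_fst.add measurable_snd) hs,
    Measure.prod_apply ((show Measurable (fun p : ℝ × ℝ => p.1 + p.2) from measurable_fst.add measurable_snd) hs)]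
  have key : ∀ x : ℝ, (gaussianReal 0 b) (Prod.mk x ⁻¹' ((fun p : ℝ × ℝ => p.1 + p.2) ⁻¹' s))
      = ∫⁻ z in s, gaussianPDF x b z := by
    intro x
    have h1 : Prod.mk x ⁻¹' ((fun p : ℝ × ℝ => p.1 + p.2) ⁻¹' s) = (fun y => x + y) ⁻¹' s := rfl
    rw [h1, ← Measure.map_apply (measurable_const_add x) hs, gaussianReal_map_const_add, zero_add,
      gaussianReal_of_var_ne_zero _ hb, withDensity_apply _ hs]
  simp_rw [key]
  rw [gaussianReal_of_var_ne_zero _ ha, gaussianReal_of_var_ne_zero _ hab, withDensity_apply _ hs,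
    lintegral_withDensity_eq_lintegral_mul _ (measurable_gaussianPDF 0 a)
      (Measurable.lintegral_prod_right' (gauss_pdf_prod_meas))]
  have swap : ∫⁻ x, gaussianPDF 0 a x * ∫⁻ z in s, gaussianPDF x b z
      = ∫⁻ z in s, ∫⁻ x, gaussianPDF 0 a x * gaussianPDF x b z := by
    have hm : ∀ x : ℝ, Measurable fun z : ℝ => gaussianPDF x b z := by
      intro x
      simp only [gaussianPDF, gaussianPDFReal]
      exact Measurable.ennreal_ofReal (by measurability)
    rw [lintegral_congr fun x => (lintegral_const_mul (gaussianPDF 0 a x) (hm x)).symm]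
    exact lintegral_lintegral_swap
      (((measurable_gaussianPDF 0 a).comp measurable_fst).mul gauss_pdf_prod_meas).aemeasurable
  calc ∫⁻ x, (gaussianPDF 0 a * fun x => ∫⁻ y in s, gaussianPDF (x, y).1 b (x, y).2) x
      = ∫⁻ x, gaussianPDF 0 a x * ∫⁻ z in s, gaussianPDF x b z := by rfl
    _ = ∫⁻ z in s, ∫⁻ x, gaussianPDF 0 a x * gaussianPDF x b z := swap
    _ = ∫⁻ z in s, gaussianPDF 0 (a + b) z := ?_
  refine setLIntegral_congr_fun hs (fun z _ => ?_)
  have hpt : ∀ x : ℝ, gaussianPDF 0 a x * gaussianPDF x b z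
      = gaussianPDF 0 (a + b) z * gaussianPDF ((a : ℝ) * z / ((a : ℝ) + b)) (a * b / (a + b)) x := by
    intro x
    have hx : gaussianPDFReal x b z = gaussianPDFReal 0 b (z - x) := by
      rw [gaussianPDFReal_sub, zero_add]
    simp only [gaussianPDF_def]
    rw [← ENNReal.ofReal_mul (gaussianPDFReal_nonneg _ _ _),
      ← ENNReal.ofReal_mul (gaussianPDFReal_nonneg _ _ _), hx, gauss_pdf_conv ha hb]
  simp_rw [hpt]
  rw [lintegral_const_mul _ (measurable_gaussianPDF _ _), lintegral_gaussianPDF_eq_one _ hc,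
    mul_one]

open MeasureTheory ProbabilityTheory Filter Finset Real
open scoped ENNReal NNReal

lemma gauss_pdf_one_eq (x : ℝ) :
    gaussianPDFReal 0 1 x = (Real.sqrt (2 * π))⁻¹ * Real.exp (-(1/2 : ℝ) * x ^ 2) := by
  simp only [gaussianPDFReal, NNReal.coe_one, mul_one, sub_zero]
  ring_nf

lemma integral_gaussianReal_std (g : ℝ → ℝ) :
    ∫ x, g x ∂(gaussianReal 0 1) = ∫ x, gaussianPDFReal 0 1 x * g x := by
  rw [gaussianReal_of_var_ne_zero _ one_ne_zero,
    show gaussianPDF 0 1 = (fun x => ((gaussianPDFReal 0 1 x).toNNReal : ℝ≥0∞)) from rfl,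
    integral_withDensity_eq_integral_smul ((measurable_gaussianPDFReal 0 1).real_toNNReal) g]
  congr 1
  funext x
  rw [NNReal.smul_def, smul_eq_mul, Real.coe_toNNReal _ (gaussianPDFReal_nonneg _ _ _)]

lemma integrable_gaussianReal_iff {g : ℝ → ℝ} :
    Integrable g (gaussianReal 0 1) ↔ Integrable (fun x => g x * gaussianPDFReal 0 1 x) := by
  rw [gaussianReal_of_var_ne_zero _ one_ne_zero, gaussianPDF_def,
    integrable_withDensity_iff (measurable_gaussianPDFReal 0 1).ennreal_ofReal
      (Filter.Eventually.of_forall fun x => ENNReal.ofReal_lt_top)]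
  refine integrable_congr (Filter.Eventually.of_forall fun x => ?_)
  simp only [ENNReal.toReal_ofReal (gaussianPDFReal_nonneg 0 1 x)]

lemma integrable_id_gauss : Integrable (fun x => x) (gaussianReal 0 1) := by
  rw [integrable_gaussianReal_iff]
  have h := (integrable_mul_exp_neg_mul_sq (b := 1/2) (by norm_num)).const_mul
    ((Real.sqrt (2 * π))⁻¹)
  refine h.congr (Filter.Eventually.of_forall fun x => ?_)
  simp only [gauss_pdf_one_eq]
  ring

lemma integrable_sq_exp : Integrable (fun x : ℝ => x ^ 2 * Real.exp (-(1/2 : ℝ) * x ^ 2)) := by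
  have hpow : ∀ x : ℝ, x ^ (2:ℝ) = x ^ (2:ℕ) := fun x => by
    rw [← Real.rpow_natCast x 2]; norm_num
  have h := integrable_rpow_mul_exp_neg_mul_sq (b := 1/2) (by norm_num) (s := 2) (by norm_num)
  simp only [hpow] at h
  exact h

lemma integrable_sq_gauss : Integrable (fun x => x ^ 2) (gaussianReal 0 1) := by
  rw [integrable_gaussianReal_iff]
  have h := integrable_sq_exp.const_mul ((Real.sqrt (2 * π))⁻¹)
  refine h.congr (Filter.Eventually.of_forall fun x => ?_)
  simp only [gauss_pdf_one_eq]
  ring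

lemma integral_id_exp : ∫ x : ℝ, x * Real.exp (-(1/2 : ℝ) * x ^ 2) = 0 := by
  have h := integral_neg_eq_self (fun x : ℝ => x * Real.exp (-(1/2 : ℝ) * x ^ 2)) volume
  simp only [neg_sq, neg_mul, integral_neg] at h
  simp only [neg_mul] at h ⊢
  linarith

lemma integral_sq_exp : ∫ x : ℝ, x ^ 2 * Real.exp (-(1/2 : ℝ) * x ^ 2) = Real.sqrt (2 * π) := by
  have h2 : ∫ x in Set.Ioi (0:ℝ), x ^ 2 * Real.exp (-(1/2 : ℝ) * x ^ 2)
      = Real.sqrt (2 * π) / 2 := by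
    have hpow : ∀ x : ℝ, x ^ (2:ℝ) = x ^ (2:ℕ) := fun x => by
      rw [← Real.rpow_natCast x 2]; norm_num
    have h := integral_rpow_mul_exp_neg_mul_rpow (p := 2) (q := 2) (b := 1/2)
      (by norm_num) (by norm_num) (by norm_num)
    simp only [hpow] at h
    rw [h, show (-((2:ℝ)+1)/2 : ℝ) = -(3/2) by norm_num,
      show (((2:ℝ)+1)/2 : ℝ) = 1/2 + 1 by norm_num,
      Real.Gamma_add_one (by norm_num), Real.Gamma_one_half_eq]
    have hc : ((1:ℝ)/2) ^ (-(3/2) : ℝ) = 2 * Real.sqrt 2 := by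
      rw [show ((1:ℝ)/2) = 2⁻¹ by norm_num, Real.inv_rpow (by norm_num : (0:ℝ) ≤ 2),
        ← Real.rpow_neg (by norm_num : (0:ℝ) ≤ 2), neg_neg,
        show (3/2 : ℝ) = 1 + 1/2 by norm_num, Real.rpow_add (by norm_num : (0:ℝ) < 2),
        Real.rpow_one, ← Real.sqrt_eq_rpow]
    rw [hc, Real.sqrt_mul (by norm_num : (0:ℝ) ≤ 2)]
    ring
  have h1 : ∫ x in Set.Iic (0:ℝ), x ^ 2 * Real.exp (-(1/2 : ℝ) * x ^ 2)
      = Real.sqrt (2 * π) / 2 := by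
    rw [← h2, ← neg_zero, ← integral_comp_neg_Ioi]
    simp [neg_sq]
  have hAll := intervalIntegral.integral_Iic_add_Ioi (b := (0:ℝ)) (μ := volume)
    integrable_sq_exp.integrableOn integrable_sq_exp.integrableOn
  rw [← hAll, h1, h2]
  ring

lemma integral_id_gaussianReal : ∫ x, x ∂(gaussianReal 0 1) = 0 := by
  rw [integral_gaussianReal_std,
    show (fun x => gaussianPDFReal 0 1 x * x)
      = fun x : ℝ => (Real.sqrt (2 * π))⁻¹ * (x * Real.exp (-(1/2 : ℝ) * x ^ 2)) from
      funext fun x => by rw [gauss_pdf_one_eq]; ring,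
    integral_const_mul, integral_id_exp, mul_zero]

lemma integral_sq_gaussianReal : ∫ x, x ^ 2 ∂(gaussianReal 0 1) = 1 := by
  rw [integral_gaussianReal_std,
    show (fun x => gaussianPDFReal 0 1 x * x ^ 2)
      = fun x : ℝ => (Real.sqrt (2 * π))⁻¹ * (x ^ 2 * Real.exp (-(1/2 : ℝ) * x ^ 2)) from
      funext fun x => by rw [gauss_pdf_one_eq]; ring,
    integral_const_mul, integral_sq_exp, inv_mul_cancel₀]
  positivity

lemma map_add_of_indep {Ω : Type*} [MeasurableSpace Ω] (P : Measure Ω) [IsProbabilityMeasure P]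
    {f g : Ω → ℝ} (hf : Measurable f) (hg : Measurable g) (hfg : IndepFun f g P)
    {a b : ℝ≥0} (ha : a ≠ 0) (hb : b ≠ 0)
    (hfa : P.map f = gaussianReal 0 a) (hgb : P.map g = gaussianReal 0 b) :
    P.map (fun ω => f ω + g ω) = gaussianReal 0 (a + b) := by
  have hpair := (indepFun_iff_map_prod_eq_prod_map_map hf.aemeasurable hg.aemeasurable).mp hfg
  have h1 : (fun ω => f ω + g ω)
      = (fun p : ℝ × ℝ => p.1 + p.2) ∘ (fun ω => (f ω, g ω)) := rfl
  rw [h1, ← Measure.map_map (show Measurable (fun p : ℝ × ℝ => p.1 + p.2) from measurable_fst.add measurable_snd) (hf.prodMk hg), hpair,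
    hfa, hgb, gauss_conv ha hb]

lemma map_sum_gauss {Ω : Type*} [MeasurableSpace Ω] (P : Measure Ω) [IsProbabilityMeasure P]
    (X : ℕ → Ω → ℝ) (hmeas : ∀ i, Measurable (X i))
    (hindep : iIndepFun X P)
    (hgauss : ∀ i, P.map (X i) = gaussianReal 0 1) (s : Finset ℕ) :
    P.map (fun ω => ∑ i ∈ s, X i ω) = gaussianReal 0 (s.card : ℝ≥0) := by
  classical
  induction s using Finset.induction_on with
  | empty =>
      simp only [Finset.sum_empty, Finset.card_empty, Nat.cast_zero]
      rw [Measure.map_const, measure_univ, one_smul, gaussianReal_zero_var]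
  | insert i s hnotmem ih =>
      have hsum_meas : Measurable fun ω => ∑ j ∈ s, X j ω :=
        Finset.measurable_sum s fun j _ => hmeas j
      have hindep' : IndepFun (X i) (fun ω => ∑ j ∈ s, X j ω) P := by
        have h := (hindep.indepFun_finset_sum_of_notMem hmeas hnotmem).symm
        have hs : (fun ω => ∑ j ∈ s, X j ω) = ∑ j ∈ s, X j := by
          funext ω; simp [Finset.sum_apply]
        rwa [hs]
      rcases Finset.eq_empty_or_nonempty s with rfl | hne
      · simp only [Finset.sum_insert (Finset.notMem_empty i), Finset.sum_empty, add_zero,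
          Finset.card_insert_of_notMem (Finset.notMem_empty i), Finset.card_empty]
        simpa using hgauss i
      · have hcard : ((s.card : ℝ≥0)) ≠ 0 := by
          simp [Finset.card_eq_zero, hne.ne_empty]
        have h := map_add_of_indep P (hmeas i) hsum_meas hindep' one_ne_zero hcard
          (hgauss i) ih
        have hs2 : (fun ω => ∑ j ∈ insert i s, X j ω)
            = fun ω => X i ω + ∑ j ∈ s, X j ω := by
          funext ω; rw [Finset.sum_insert hnotmem]
        rw [hs2, h, Finset.card_insert_of_notMem hnotmem]
        congr 1
        push_cast
        ring

lemma gaussianReal_nat_scale (n : ℕ) :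
    gaussianReal 0 (n : ℝ≥0) = (gaussianReal 0 1).map (fun x => Real.sqrt n * x) := by
  rw [show (fun x : ℝ => Real.sqrt n * x) = (Real.sqrt (n : ℕ) * ·) from rfl,
    gaussianReal_map_const_mul]
  congr 1
  · simp
  · ext
    simp [Real.sq_sqrt (Nat.cast_nonneg n)]

/-- For `X_i` i.i.d. standard Gaussians and `Z_n = 2(Σ_{i<n} X_i)(Σ_{n≤j<2n} X_j)`:
`Z_n` has the same distribution as `2n·X₀X₁`, its variance is `4n²`, and
`Z_n/√(Var Z_n)` converges in distribution to `X₀X₁`. -/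
theorem stmt12 {Ω : Type*} [MeasurableSpace Ω] (P : Measure Ω) [IsProbabilityMeasure P]
    (X : ℕ → Ω → ℝ) (hmeas : ∀ i, Measurable (X i))
    (hindep : iIndepFun X P)
    (hgauss : ∀ i, P.map (X i) = gaussianReal 0 1)
    (Z : ℕ → Ω → ℝ)
    (hZ : ∀ n ω, Z n ω =
      2 * (∑ i ∈ Finset.range n, X i ω) * (∑ j ∈ Finset.Ico n (2 * n), X j ω)) :
    (∀ n : ℕ, P.map (Z n) = P.map (fun ω => (2 * n : ℝ) * (X 0 ω * X 1 ω))) ∧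
    (∀ n : ℕ, variance (Z n) P = 4 * (n : ℝ) ^ 2) ∧
    (∀ f : BoundedContinuousFunction ℝ ℝ,
      Tendsto (fun n : ℕ =>
          ∫ ω, f (Z n ω / Real.sqrt (variance (Z n) P)) ∂P)
        atTop (nhds (∫ ω, f (X 0 ω * X 1 ω) ∂P))) := by
  set γ : Measure ℝ := gaussianReal 0 1 with hγ
  set γ2 : Measure (ℝ × ℝ) := γ.prod γ with hγ2
  -- measurability of Z
  have hZeq : ∀ n, Z n = fun ω =>
      2 * (∑ i ∈ Finset.range n, X i ω) * (∑ j ∈ Finset.Ico n (2 * n), X j ω) :=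
    fun n => funext (hZ n)
  have hSmeas : ∀ n : ℕ, Measurable fun ω => ∑ i ∈ Finset.range n, X i ω :=
    fun n => Finset.measurable_sum _ fun i _ => hmeas i
  have hTmeas : ∀ n : ℕ, Measurable fun ω => ∑ j ∈ Finset.Ico n (2 * n), X j ω :=
    fun n => Finset.measurable_sum _ fun i _ => hmeas i
  have hZmeas : ∀ n, Measurable (Z n) := fun n => by
    rw [hZeq n]; exact ((measurable_const.mul (hSmeas n)).mul (hTmeas n))
  -- joint law of the two block sums
  have hindepST : ∀ n : ℕ, IndepFun (fun ω => ∑ i ∈ Finset.range n, X i ω)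
      (fun ω => ∑ j ∈ Finset.Ico n (2 * n), X j ω) P := by
    intro n
    have hdisj : Disjoint (Finset.range n) (Finset.Ico n (2 * n)) := by
      simp only [Finset.disjoint_left, Finset.mem_range, Finset.mem_Ico]
      omega
    have h := (hindep.indepFun_finset (Finset.range n) (Finset.Ico n (2 * n)) hdisj hmeas).comp
      (Finset.measurable_sum Finset.univ fun i _ => measurable_pi_apply i)
      (Finset.measurable_sum Finset.univ fun i _ => measurable_pi_apply i)
    convert h using 1
    · funext ω; exact (Finset.sum_coe_sort _ _).symm
    · funext ω; exact (Finset.sum_coe_sort _ _).symm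
  have hSlaw : ∀ n : ℕ, P.map (fun ω => ∑ i ∈ Finset.range n, X i ω)
      = gaussianReal 0 (n : ℝ≥0) := by
    intro n
    rw [map_sum_gauss P X hmeas hindep hgauss (Finset.range n), Finset.card_range]
  have hTlaw : ∀ n : ℕ, P.map (fun ω => ∑ j ∈ Finset.Ico n (2 * n), X j ω)
      = gaussianReal 0 (n : ℝ≥0) := by
    intro n
    rw [map_sum_gauss P X hmeas hindep hgauss (Finset.Ico n (2 * n)), Nat.card_Ico,
      show 2 * n - n = n from by omega]
  -- law of Z n as pushforward of γ2
  have key : ∀ n : ℕ, P.map (Z n)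
      = γ2.map (fun p : ℝ × ℝ => (2 * n : ℝ) * (p.1 * p.2)) := by
    intro n
    have hpair := (indepFun_iff_map_prod_eq_prod_map_map
      (hSmeas n).aemeasurable (hTmeas n).aemeasurable).mp (hindepST n)
    have hcomp : Z n = (fun p : ℝ × ℝ => 2 * p.1 * p.2)
        ∘ (fun ω => (∑ i ∈ Finset.range n, X i ω, ∑ j ∈ Finset.Ico n (2 * n), X j ω)) := by
      rw [hZeq n]; rfl
    have hm2 : Measurable fun p : ℝ × ℝ => 2 * p.1 * p.2 :=
      (measurable_const.mul measurable_fst).mul measurable_snd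
    rw [hcomp, ← Measure.map_map hm2 ((hSmeas n).prodMk (hTmeas n)), hpair, hSlaw n, hTlaw n,
      gaussianReal_nat_scale n, ← hγ,
      Measure.map_prod_map _ _ (measurable_const_mul _) (measurable_const_mul _), ← hγ2,
      Measure.map_map hm2 ((measurable_const_mul _).prodMap (measurable_const_mul _))]
    congr 1
    funext p
    show 2 * (Real.sqrt n * p.1) * (Real.sqrt n * p.2) = (2 * n : ℝ) * (p.1 * p.2)
    have : Real.sqrt n * Real.sqrt n = (n : ℝ) := Real.mul_self_sqrt (Nat.cast_nonneg n)
    linear_combination (2 * p.1 * p.2) * this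
  -- law of c * X0 * X1
  have hpair01 : P.map (fun ω => (X 0 ω, X 1 ω)) = γ2 := by
    rw [(indepFun_iff_map_prod_eq_prod_map_map
      (hmeas 0).aemeasurable (hmeas 1).aemeasurable).mp (hindep.indepFun (by norm_num)),
      hgauss 0, hgauss 1]
  have keyX : ∀ c : ℝ, P.map (fun ω => c * (X 0 ω * X 1 ω))
      = γ2.map (fun p : ℝ × ℝ => c * (p.1 * p.2)) := by
    intro c
    have hm2 : Measurable fun p : ℝ × ℝ => c * (p.1 * p.2) :=
      measurable_const.mul (measurable_fst.mul measurable_snd)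
    rw [show (fun ω => c * (X 0 ω * X 1 ω)) = (fun p : ℝ × ℝ => c * (p.1 * p.2))
        ∘ (fun ω => (X 0 ω, X 1 ω)) from rfl,
      ← Measure.map_map hm2 ((hmeas 0).prodMk (hmeas 1)), hpair01]
  -- Part 1
  have part1 : ∀ n : ℕ, P.map (Z n) = P.map (fun ω => (2 * n : ℝ) * (X 0 ω * X 1 ω)) :=
    fun n => by rw [key n, keyX (2 * n : ℝ)]
  -- moments of h_c := fun p => c * (p.1 * p.2) under γ2
  have hmeas_h : ∀ c : ℝ, Measurable fun p : ℝ × ℝ => c * (p.1 * p.2) :=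
    fun c => measurable_const.mul (measurable_fst.mul measurable_snd)
  have hint_h : ∀ c : ℝ, ∫ p, c * (p.1 * p.2) ∂γ2 = 0 := by
    intro c
    rw [integral_const_mul, integral_prod_mul (fun x : ℝ => x) (fun x : ℝ => x),
      _root_.integral_id_gaussianReal]
    simp
  have hint_h2 : ∀ c : ℝ, ∫ p, (c * (p.1 * p.2)) ^ 2 ∂γ2 = c ^ 2 := by
    intro c
    have : ∀ p : ℝ × ℝ, (c * (p.1 * p.2)) ^ 2 = c ^ 2 * (p.1 ^ 2 * p.2 ^ 2) := by
      intro p; ring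
    simp_rw [this]
    rw [integral_const_mul, integral_prod_mul (fun x : ℝ => x ^ 2) (fun x : ℝ => x ^ 2),
      integral_sq_gaussianReal]
    simp
  have hmem_h : ∀ c : ℝ, MemLp (fun p : ℝ × ℝ => c * (p.1 * p.2)) 2 γ2 := by
    intro c
    rw [memLp_two_iff_integrable_sq (hmeas_h c).aestronglyMeasurable]
    have h := (integrable_sq_gauss.const_mul (c ^ 2)).mul_prod
      (μ := γ) (ν := γ) integrable_sq_gauss
    refine h.congr (Filter.Eventually.of_forall fun p => ?_)
    show c ^ 2 * p.1 ^ 2 * p.2 ^ 2 = (c * (p.1 * p.2)) ^ 2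
    ring
  -- Memℒp of Z n
  have hmemZ : ∀ n : ℕ, MemLp (Z n) 2 P := by
    intro n
    have h1 : MemLp (id : ℝ → ℝ) 2 (P.map (Z n)) := by
      rw [key n]
      rw [memLp_map_measure_iff aestronglyMeasurable_id (hmeas_h _).aemeasurable]
      exact hmem_h _
    have := (memLp_map_measure_iff aestronglyMeasurable_id (hZmeas n).aemeasurable).mp h1
    simpa using this
  -- integrals of Z n
  have hintZ : ∀ n : ℕ, ∫ ω, Z n ω ∂P = 0 := by
    intro n
    have h1 : ∫ ω, Z n ω ∂P = ∫ y, y ∂(P.map (Z n)) :=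
      (integral_map (hZmeas n).aemeasurable (f := fun y : ℝ => y)
        measurable_id.aestronglyMeasurable).symm
    rw [h1, key n, integral_map (hmeas_h _).aemeasurable (f := fun y : ℝ => y)
      measurable_id.aestronglyMeasurable]
    simpa using hint_h (2 * n : ℝ)
  have hintZ2 : ∀ n : ℕ, ∫ ω, Z n ω ^ 2 ∂P = (2 * n : ℝ) ^ 2 := by
    intro n
    have h1 : ∫ ω, Z n ω ^ 2 ∂P = ∫ y, y ^ 2 ∂(P.map (Z n)) :=
      (integral_map (hZmeas n).aemeasurable (f := fun y : ℝ => y ^ 2)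
        (measurable_id.pow_const 2).aestronglyMeasurable).symm
    rw [h1, key n, integral_map (hmeas_h _).aemeasurable (f := fun y : ℝ => y ^ 2)
      (measurable_id.pow_const 2).aestronglyMeasurable]
    simpa using hint_h2 (2 * n : ℝ)
  -- Part 2
  have part2 : ∀ n : ℕ, variance (Z n) P = 4 * (n : ℝ) ^ 2 := by
    intro n
    rw [variance_eq_sub (hmemZ n)]
    have : ∫ ω, (Z n ^ 2) ω ∂P = (2 * n : ℝ) ^ 2 := by
      simp_rw [Pi.pow_apply]
      exact hintZ2 n
    rw [this, hintZ n]
    ring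
  refine ⟨part1, part2, ?_⟩
  -- Part 3
  intro f
  have hconst : ∀ n : ℕ, 1 ≤ n →
      ∫ ω, f (Z n ω / Real.sqrt (variance (Z n) P)) ∂P = ∫ ω, f (X 0 ω * X 1 ω) ∂P := by
    intro n hn
    have hn' : (0 : ℝ) < 2 * n := by positivity
    have hsqrt : Real.sqrt (variance (Z n) P) = 2 * n := by
      rw [part2 n, show (4 * (n:ℝ) ^ 2) = (2 * n) ^ 2 by ring, Real.sqrt_sq hn'.le]
    have hmapdiv : P.map (fun ω => Z n ω / (2 * n : ℝ))
        = P.map (fun ω => X 0 ω * X 1 ω) := by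
      have hcomp : (fun ω => Z n ω / (2 * n : ℝ))
          = (fun y : ℝ => y / (2 * n : ℝ)) ∘ Z n := rfl
      rw [hcomp, ← Measure.map_map (measurable_div_const _) (hZmeas n), key n,
        Measure.map_map (measurable_div_const _) (hmeas_h _)]
      have : ((fun y : ℝ => y / (2 * n : ℝ)) ∘ fun p : ℝ × ℝ => (2 * n : ℝ) * (p.1 * p.2))
          = fun p : ℝ × ℝ => (1 : ℝ) * (p.1 * p.2) := by
        funext p
        show ((2 * n : ℝ) * (p.1 * p.2)) / (2 * n : ℝ) = 1 * (p.1 * p.2)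
        field_simp
      rw [this, ← keyX 1]
      simp
    calc ∫ ω, f (Z n ω / Real.sqrt (variance (Z n) P)) ∂P
        = ∫ ω, f (Z n ω / (2 * n : ℝ)) ∂P := by rw [hsqrt]
      _ = ∫ y, f y ∂(P.map (fun ω => Z n ω / (2 * n : ℝ))) := by
          rw [integral_map ((hZmeas n).div_const _).aemeasurable
            f.continuous.measurable.aestronglyMeasurable]
      _ = ∫ y, f y ∂(P.map (fun ω => X 0 ω * X 1 ω)) := by rw [hmapdiv]
      _ = ∫ ω, f (X 0 ω * X 1 ω) ∂P := by
          rw [integral_map (show Measurable (fun ω => X 0 ω * X 1 ω) from (hmeas 0).mul (hmeas 1)).aemeasurable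
            f.continuous.measurable.aestronglyMeasurable]
  refine Tendsto.congr' ?_ tendsto_const_nhds
  filter_upwards [eventually_ge_atTop 1] with n hn
  exact (hconst n hn).symm
end

section
/- Let d ≥ 2 and let {E_n} be symmetric non-diagonal subsets of V_n^d with |V_n| → ∞, having combinatorial dimension α with 1 < α ≤ d (with constants c, c' as in the definition). Then there is no sequence of families of pairwise disjoint nonempty subsets B₁,…,B_{m_n} ⊆ V_n with m_n → ∞ such that both Σ_{i=1}^{m_n} |E_n ∩ B_i^d| ≍ |E_n| and max_i |E_n ∩ B_i^d| = o(|E_n|) hold as n → ∞. -/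
open Finset Filter

set_option maxHeartbeats 4000000

set_option maxHeartbeats 4000000 in
private lemma key18 (α : ℝ) (hα1 : 1 < α) (c c' c₁ : ℝ) (hc' : 0 < c') (hcc : c' ≤ c)
    (hc₁ : 0 < c₁) (N : ℕ) (t b : Fin N → ℝ) (e Vc M : ℝ)
    (ht0 : ∀ i, 0 ≤ t i) (hb0 : ∀ i, 0 ≤ b i) (he : 0 < e) (hM0 : 0 ≤ M)
    (hVc : 0 ≤ Vc)
    (htM : ∀ i, t i ≤ M)
    (htb : ∀ i, t i ≤ c * b i ^ α)
    (hbV : ∑ i, b i ≤ Vc)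
    (hVe : c' * Vc ^ α ≤ e)
    (hS : c₁ * e ≤ ∑ i, t i) :
    c₁ / ((c / c') ^ (1/α)) ≤ (M / e) ^ (1 - 1/α) := by
  have hα0 : (0:ℝ) < α := by linarith
  have hc : (0:ℝ) < c := lt_of_lt_of_le hc' hcc
  set p : ℝ := 1 - 1/α with hpdef
  have h1α : 1/α < 1 := by rw [div_lt_one hα0]; linarith
  have hp : 0 < p := by simp only [hpdef]; linarith
  have hstepA : ∀ i, t i ^ (1/α) ≤ c ^ (1/α) * b i := by
    intro i
    have h1 : (c ^ (1/α) * b i) ^ α = c * b i ^ α := by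
      rw [Real.mul_rpow (Real.rpow_nonneg hc.le _) (hb0 i), ← Real.rpow_mul hc.le,
        one_div_mul_cancel hα0.ne', Real.rpow_one]
    calc t i ^ (1/α) ≤ ((c ^ (1/α) * b i) ^ α) ^ (1/α) := by
          apply Real.rpow_le_rpow (ht0 i) _ (one_div_nonneg.mpr hα0.le)
          rw [h1]; exact htb i
      _ = c ^ (1/α) * b i := by
          rw [← Real.rpow_mul (mul_nonneg (Real.rpow_nonneg hc.le _) (hb0 i)),
            mul_one_div_cancel hα0.ne', Real.rpow_one]
  have hstepB : ∀ i, t i ≤ M ^ p * t i ^ (1/α) := by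
    intro i
    rcases (ht0 i).eq_or_lt with h0 | hpos
    · rw [← h0]
      exact mul_nonneg (Real.rpow_nonneg hM0 _) (Real.rpow_nonneg le_rfl _)
    · have hps : p + 1/α = 1 := by simp [hpdef]
      have h1 : t i = t i ^ p * t i ^ (1/α) := by
        rw [← Real.rpow_add hpos, hps, Real.rpow_one]
      calc t i = t i ^ p * t i ^ (1/α) := h1
        _ ≤ M ^ p * t i ^ (1/α) :=
          mul_le_mul_of_nonneg_right (Real.rpow_le_rpow hpos.le (htM i) hp.le)
            (Real.rpow_nonneg hpos.le _)
  have hsum1 : ∑ i, t i ≤ M ^ p * ∑ i, t i ^ (1/α) := by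
    rw [Finset.mul_sum]
    exact Finset.sum_le_sum fun i _ => hstepB i
  have hsum2 : ∑ i, t i ^ (1/α) ≤ c ^ (1/α) * Vc := by
    calc ∑ i, t i ^ (1/α) ≤ ∑ i, c ^ (1/α) * b i := Finset.sum_le_sum fun i _ => hstepA i
      _ = c ^ (1/α) * ∑ i, b i := by rw [Finset.mul_sum]
      _ ≤ c ^ (1/α) * Vc := mul_le_mul_of_nonneg_left hbV (Real.rpow_nonneg hc.le _)
  have hVle : Vc ≤ (e / c') ^ (1/α) := by
    have h1 : Vc ^ α ≤ e / c' := by rw [le_div_iff₀ hc']; linarith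
    calc Vc = (Vc ^ α) ^ (1/α) := by
          rw [← Real.rpow_mul hVc, mul_one_div_cancel hα0.ne', Real.rpow_one]
      _ ≤ (e / c') ^ (1/α) :=
          Real.rpow_le_rpow (Real.rpow_nonneg hVc _) h1 (one_div_nonneg.mpr hα0.le)
  have hmain : c₁ * e ≤ M ^ p * ((c/c') ^ (1/α) * e ^ (1/α)) := by
    have h3 : c ^ (1/α) * (e/c') ^ (1/α) = (c/c') ^ (1/α) * e ^ (1/α) := by
      rw [Real.div_rpow he.le hc'.le, Real.div_rpow hc.le hc'.le]
      have hne : c' ^ (1/α) ≠ 0 := (Real.rpow_pos_of_pos hc' _).ne'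
      field_simp
    calc c₁ * e ≤ ∑ i, t i := hS
      _ ≤ M ^ p * ∑ i, t i ^ (1/α) := hsum1
      _ ≤ M ^ p * (c ^ (1/α) * Vc) :=
          mul_le_mul_of_nonneg_left hsum2 (Real.rpow_nonneg hM0 _)
      _ ≤ M ^ p * (c ^ (1/α) * (e/c') ^ (1/α)) := by
          apply mul_le_mul_of_nonneg_left _ (Real.rpow_nonneg hM0 _)
          exact mul_le_mul_of_nonneg_left hVle (Real.rpow_nonneg hc.le _)
      _ = M ^ p * ((c/c') ^ (1/α) * e ^ (1/α)) := by rw [h3]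
  have hK : (0:ℝ) < (c/c') ^ (1/α) := Real.rpow_pos_of_pos (div_pos hc hc') _
  have h2 : (M/e) ^ p = M ^ p * e ^ (1/α) / e := by
    rw [Real.div_rpow hM0 he.le]
    have hep : e ^ p = e / e ^ (1/α) := by
      rw [hpdef, Real.rpow_sub he, Real.rpow_one]
    rw [hep, div_div_eq_mul_div]
  rw [h2, div_le_div_iff₀ hK he]
  calc c₁ * e ≤ M ^ p * ((c/c') ^ (1/α) * e ^ (1/α)) := hmain
    _ = M ^ p * e ^ (1/α) * (c/c') ^ (1/α) := by ring

/-- Irreducibility from combinatorial dimension: if `{E_n}` are symmetric non-diagonal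
subsets of `V_n^d` with `|V_n| → ∞`, `|E_n| → ∞`, having combinatorial dimension
`α ∈ (1,d]`, then there is no sequence of families of pairwise disjoint nonempty subsets
`B₁,…,B_{m_n} ⊆ V_n` with `m_n → ∞` such that `Σᵢ |E_n ∩ Bᵢ^d| ≍ |E_n|` and
`maxᵢ |E_n ∩ Bᵢ^d| = o(|E_n|)`. -/
theorem stmt18 (d : ℕ) (hd : 2 ≤ d) (α : ℝ) (hα1 : 1 < α) (hαd : α ≤ (d : ℝ))
    (V : ℕ → Type*) [∀ n, Fintype (V n)] [∀ n, DecidableEq (V n)]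
    (hV : Tendsto (fun n => Fintype.card (V n)) atTop atTop)
    (E : ∀ n, Finset (Fin d → V n))
    (hsymm : ∀ n (σ : Equiv.Perm (Fin d)), ∀ f ∈ E n, f ∘ σ ∈ E n)
    (hnondiag : ∀ n, ∀ f ∈ E n, Function.Injective f)
    (hEcard : Tendsto (fun n => (E n).card) atTop atTop)
    (hcd : ∃ c c' : ℝ, 0 < c' ∧ c' ≤ c ∧ ∀ᶠ n in atTop,
      (∀ A : Fin d → Finset (V n),
        (((E n).filter fun f => ∀ i, f i ∈ A i).card : ℝ)
          ≤ c * ((Finset.univ.sup fun i => (A i).card : ℕ) : ℝ) ^ α) ∧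
      c' * (Fintype.card (V n) : ℝ) ^ α ≤ ((E n).card : ℝ)) :
    ¬ ∃ (m : ℕ → ℕ) (B : ∀ n, Fin (m n) → Finset (V n)),
      (∀ n i, (B n i).Nonempty) ∧
      (∀ n, ∀ i j : Fin (m n), i ≠ j → Disjoint (B n i) (B n j)) ∧
      Tendsto m atTop atTop ∧
      (∃ c₁ c₂ : ℝ, 0 < c₁ ∧ c₁ ≤ c₂ ∧ ∀ᶠ n in atTop,
        c₁ * ((E n).card : ℝ) ≤
            ∑ i, (((E n).filter fun f => ∀ j, f j ∈ B n i).card : ℝ) ∧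
        ∑ i, (((E n).filter fun f => ∀ j, f j ∈ B n i).card : ℝ) ≤
            c₂ * ((E n).card : ℝ)) ∧
      Tendsto (fun n =>
          (((Finset.univ.sup fun i =>
              ((E n).filter fun f => ∀ j, f j ∈ B n i).card : ℕ)) : ℝ) /
            ((E n).card : ℝ))
        atTop (nhds 0) := by
  rintro ⟨m, B, hne, hdisj, hm, ⟨c₁, c₂, hc₁, hc₁₂, hsum⟩, hmax⟩
  obtain ⟨c, c', hc', hcc, hcd⟩ := hcd
  have hα0 : (0:ℝ) < α := by linarith
  have hp : 0 < 1 - 1/α := by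
    have h1 : 1/α < 1 := by rw [div_lt_one hα0]; linarith
    linarith
  have hK : (0:ℝ) < (c/c') ^ (1/α) :=
    Real.rpow_pos_of_pos (div_pos (lt_of_lt_of_le hc' hcc) hc') _
  have hδ : 0 < c₁ / ((c/c') ^ (1/α)) := div_pos hc₁ hK
  have hlow : ∀ᶠ n in atTop, c₁ / ((c/c') ^ (1/α)) ≤
      ((((Finset.univ.sup fun i =>
            ((E n).filter fun f => ∀ j, f j ∈ B n i).card : ℕ)) : ℝ) /
          ((E n).card : ℝ)) ^ (1 - 1/α) := by
    filter_upwards [hcd, hsum, hEcard.eventually_ge_atTop 1] with n hcdn hsumn hEn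
    obtain ⟨hA, hVe⟩ := hcdn
    obtain ⟨hS, -⟩ := hsumn
    haveI : Nonempty (Fin d) := ⟨⟨0, by omega⟩⟩
    have he : (0:ℝ) < ((E n).card : ℝ) := by exact_mod_cast hEn
    have htb : ∀ i : Fin (m n), (((E n).filter fun f => ∀ j, f j ∈ B n i).card : ℝ)
        ≤ c * ((B n i).card : ℝ) ^ α := by
      intro i
      have h := hA (fun _ => B n i)
      simpa [Finset.sup_const Finset.univ_nonempty] using h
    have hbV : ∑ i : Fin (m n), ((B n i).card : ℝ) ≤ (Fintype.card (V n) : ℝ) := by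
      have h1 : ∑ i, (B n i).card ≤ Fintype.card (V n) := by
        rw [← Finset.card_biUnion (fun i _ j _ hij => hdisj n i j hij)]
        exact Finset.card_le_univ _
      exact_mod_cast h1
    refine key18 α hα1 c c' c₁ hc' hcc hc₁ (m n)
      (fun i => (((E n).filter fun f => ∀ j, f j ∈ B n i).card : ℝ))
      (fun i => ((B n i).card : ℝ)) ((E n).card : ℝ) ((Fintype.card (V n)) : ℝ)
      (((Finset.univ.sup fun i =>
          ((E n).filter fun f => ∀ j, f j ∈ B n i).card : ℕ)) : ℝ)
      ?_ ?_ ?_ ?_ ?_ ?_ ?_ ?_ ?_ ?_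
    · exact fun i => Nat.cast_nonneg _
    · exact fun i => Nat.cast_nonneg _
    · exact he
    · exact Nat.cast_nonneg _
    · exact Nat.cast_nonneg _
    · exact fun i => Nat.cast_le.mpr (Finset.le_sup
        (f := fun i => ((E n).filter fun f => ∀ j, f j ∈ B n i).card) (Finset.mem_univ i))
    · exact htb
    · exact hbV
    · exact hVe
    · exact hS
  have h0 : Tendsto (fun n =>
      ((((Finset.univ.sup fun i =>
            ((E n).filter fun f => ∀ j, f j ∈ B n i).card : ℕ)) : ℝ) /
          ((E n).card : ℝ)) ^ (1 - 1/α)) atTop (nhds 0) := by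
    have h := hmax.rpow_const (Or.inr hp.le)
    rwa [Real.zero_rpow hp.ne'] at h
  obtain ⟨n, hn1, hn2⟩ := (hlow.and (h0.eventually_lt_const hδ)).exists
  exact absurd (hn1.trans_lt hn2) (lt_irrefl _)
end

section
/- For n ≥ d ≥ 2, let V_n = [n]² and let E_n¹ = {((a,b),(b,c),(c,a)) : a,b,c ∈ [n] pairwise distinct} ⊆ V_n³ (restricting to vertices with distinct coordinates). Then |E_n¹| = n(n−1)(n−2), and for all subsets A₁, A₂, A₃ ⊆ V_n one has |E_n¹ ∩ (A₁×A₂×A₃)| ≤ (|A₁|·|A₂|·|A₃|)^{1/2} ≤ max_i |A_i|^{3/2}. -/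
open Finset

private lemma count3 (n : ℕ) :
    ((univ : Finset (Fin n × Fin n × Fin n)).filter fun p =>
      p.1 ≠ p.2.1 ∧ p.2.1 ≠ p.2.2 ∧ p.2.2 ≠ p.1).card = n * (n - 1) * (n - 2) := by
  rw [Finset.card_filter, Fintype.sum_prod_type]
  have inner : ∀ a b : Fin n,
      (∑ c : Fin n, if a ≠ b ∧ b ≠ c ∧ c ≠ a then (1:ℕ) else 0)
        = if a ≠ b then n - 2 else 0 := by
    intro a b
    by_cases hab : a = b
    · simp [hab]
    · rw [if_pos hab, (Finset.card_filter _ _).symm]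
      have h2 : (univ.filter fun c : Fin n => a ≠ b ∧ b ≠ c ∧ c ≠ a) = (univ \ {b, a}) := by
        ext c
        simp only [mem_filter, mem_univ, true_and, mem_sdiff, mem_insert, mem_singleton,
          not_or, Ne]
        constructor
        · rintro ⟨-, h1, h2⟩; exact ⟨fun h => h1 h.symm, h2⟩
        · rintro ⟨h1, h2⟩; exact ⟨hab, fun h => h1 h.symm, h2⟩
      rw [h2, Finset.card_sdiff_of_subset (by simp), Finset.card_univ, Fintype.card_fin,
        Finset.card_insert_of_notMem (by simp [hab]; exact fun h => hab h.symm),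
        Finset.card_singleton]
  have mid : ∀ a : Fin n,
      (∑ b : Fin n, ∑ c : Fin n, if a ≠ b ∧ b ≠ c ∧ c ≠ a then (1:ℕ) else 0)
        = (n - 1) * (n - 2) := by
    intro a
    simp_rw [fun b => inner a b]
    rw [Finset.sum_ite, Finset.sum_const, Finset.sum_const, smul_eq_mul, smul_eq_mul,
      mul_zero, add_zero]
    congr 1
    have h3 : (univ.filter fun b : Fin n => a ≠ b) = univ.erase a := by
      ext b; simp [Ne, eq_comm]
    rw [h3, Finset.card_erase_of_mem (mem_univ a), Finset.card_univ, Fintype.card_fin]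
  simp_rw [Fintype.sum_prod_type, fun a => mid a]
  rw [Finset.sum_const, Finset.card_univ, Fintype.card_fin, smul_eq_mul, mul_assoc]

private lemma indicator_sum (n : ℕ) (A : Finset (Fin n × Fin n)) :
    (∑ a : Fin n, ∑ b : Fin n, (if (a, b) ∈ A then (1:ℝ) else 0)) = A.card := by
  have h : (∑ p : Fin n × Fin n, (if p ∈ A then (1:ℝ) else 0)) = A.card := by
    rw [Finset.sum_ite_mem, Finset.univ_inter, Finset.sum_const, nsmul_eq_mul, mul_one]
  rw [← h, Fintype.sum_prod_type]

private lemma cs_bound (n : ℕ) (A₁ A₂ A₃ : Finset (Fin n × Fin n)) :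
    ((univ.filter fun p : Fin n × Fin n × Fin n =>
        (p.1, p.2.1) ∈ A₁ ∧ (p.2.1, p.2.2) ∈ A₂ ∧ (p.2.2, p.1) ∈ A₃).card : ℝ)
      ≤ Real.sqrt ((A₁.card : ℝ) * (A₂.card : ℝ) * (A₃.card : ℝ)) := by
  set f : Fin n → Fin n → ℝ := fun a b => if (a, b) ∈ A₁ then 1 else 0 with hf
  set g : Fin n → Fin n → ℝ := fun b c => if (b, c) ∈ A₂ then 1 else 0 with hg
  set h : Fin n → Fin n → ℝ := fun c a => if (c, a) ∈ A₃ then 1 else 0 with hh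
  have hcard : ((univ.filter fun p : Fin n × Fin n × Fin n =>
        (p.1, p.2.1) ∈ A₁ ∧ (p.2.1, p.2.2) ∈ A₂ ∧ (p.2.2, p.1) ∈ A₃).card : ℝ)
      = ∑ p : Fin n × Fin n, f p.1 p.2 * (∑ c : Fin n, g p.2 c * h c p.1) := by
    rw [Finset.card_filter]
    push_cast
    rw [Fintype.sum_prod_type]
    simp_rw [Fintype.sum_prod_type, Finset.mul_sum]
    congr 1; ext a; congr 1; ext b; congr 1; ext c
    by_cases h1 : (a, b) ∈ A₁ <;> by_cases h2 : (b, c) ∈ A₂ <;> by_cases h3 : (c, a) ∈ A₃ <;>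
      simp [hf, hg, hh, h1, h2, h3]
  rw [hcard]
  have key := Real.sum_mul_le_sqrt_mul_sqrt univ
    (fun p : Fin n × Fin n => f p.1 p.2) (fun p : Fin n × Fin n => ∑ c : Fin n, g p.2 c * h c p.1)
  refine key.trans ?_
  have e1 : (∑ p : Fin n × Fin n, f p.1 p.2 ^ 2) = (A₁.card : ℝ) := by
    rw [← indicator_sum n A₁, Fintype.sum_prod_type]
    congr 1; ext a; congr 1; ext b
    by_cases h1 : (a, b) ∈ A₁ <;> simp [hf, h1]
  have e2 : (∑ p : Fin n × Fin n, (∑ c : Fin n, g p.2 c * h c p.1) ^ 2)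
      ≤ (A₂.card : ℝ) * (A₃.card : ℝ) := by
    have step : ∀ p : Fin n × Fin n, (∑ c : Fin n, g p.2 c * h c p.1) ^ 2
        ≤ (∑ c : Fin n, g p.2 c ^ 2) * (∑ c : Fin n, h c p.1 ^ 2) :=
      fun p => Finset.sum_mul_sq_le_sq_mul_sq univ _ _
    refine (Finset.sum_le_sum fun p _ => step p).trans ?_
    rw [Fintype.sum_prod_type]
    have e3 : ∀ a : Fin n, (∑ b : Fin n, (∑ c : Fin n, g b c ^ 2) * (∑ c : Fin n, h c a ^ 2))
        = (∑ b : Fin n, ∑ c : Fin n, g b c ^ 2) * (∑ c : Fin n, h c a ^ 2) := by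
      intro a; rw [← Finset.sum_mul]
    simp_rw [e3]
    rw [← Finset.mul_sum]
    have eg : (∑ b : Fin n, ∑ c : Fin n, g b c ^ 2) = (A₂.card : ℝ) := by
      rw [← indicator_sum n A₂]
      congr 1; ext b; congr 1; ext c
      by_cases h2 : (b, c) ∈ A₂ <;> simp [hg, h2]
    have eh : (∑ a : Fin n, ∑ c : Fin n, h c a ^ 2) = (A₃.card : ℝ) := by
      rw [← indicator_sum n A₃, Finset.sum_comm]
      congr 1; ext c; congr 1; ext a
      by_cases h3 : (c, a) ∈ A₃ <;> simp [hh, h3]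
    rw [eg, eh]
  calc √(∑ p : Fin n × Fin n, f p.1 p.2 ^ 2) *
        √(∑ p : Fin n × Fin n, (∑ c : Fin n, g p.2 c * h c p.1) ^ 2)
      ≤ √((A₁.card : ℝ)) * √((A₂.card : ℝ) * (A₃.card : ℝ)) := by
        refine mul_le_mul (by rw [e1]) (Real.sqrt_le_sqrt e2) (Real.sqrt_nonneg _)
          (Real.sqrt_nonneg _)
    _ = √((A₁.card : ℝ) * (A₂.card : ℝ) * (A₃.card : ℝ)) := by
        rw [← Real.sqrt_mul (by positivity), mul_assoc]

/-- For `n ≥ 2`, the set `E_n¹` of cyclic triples `((a,b),(b,c),(c,a))` with `a,b,c ∈ [n]`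
pairwise distinct has cardinality `n(n−1)(n−2)`, and for all `A₁,A₂,A₃ ⊆ V_n`
(subsets of off-diagonal pairs) one has
`|E_n¹ ∩ (A₁×A₂×A₃)| ≤ √(|A₁||A₂||A₃|) ≤ (maxᵢ|Aᵢ|)^{3/2}`. -/
theorem stmt19 (n : ℕ) (hn : 2 ≤ n)
    (E : Finset ((Fin n × Fin n) × (Fin n × Fin n) × (Fin n × Fin n)))
    (hE : E = Finset.univ.filter fun t =>
      t.1.2 = t.2.1.1 ∧ t.2.1.2 = t.2.2.1 ∧ t.2.2.2 = t.1.1 ∧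
      t.1.1 ≠ t.1.2 ∧ t.2.1.1 ≠ t.2.1.2 ∧ t.2.2.1 ≠ t.2.2.2) :
    E.card = n * (n - 1) * (n - 2) ∧
    ∀ A₁ A₂ A₃ : Finset (Fin n × Fin n),
      (∀ p ∈ A₁, p.1 ≠ p.2) → (∀ p ∈ A₂, p.1 ≠ p.2) → (∀ p ∈ A₃, p.1 ≠ p.2) →
      ((E.filter fun t => t.1 ∈ A₁ ∧ t.2.1 ∈ A₂ ∧ t.2.2 ∈ A₃).card : ℝ)
          ≤ Real.sqrt ((A₁.card : ℝ) * (A₂.card : ℝ) * (A₃.card : ℝ)) ∧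
        Real.sqrt ((A₁.card : ℝ) * (A₂.card : ℝ) * (A₃.card : ℝ))
          ≤ ((max (max A₁.card A₂.card) A₃.card : ℕ) : ℝ) ^ (3 / 2 : ℝ) := by
  subst hE
  constructor
  · -- cardinality
    have himg : (Finset.univ.filter fun t :
          (Fin n × Fin n) × (Fin n × Fin n) × (Fin n × Fin n) =>
        t.1.2 = t.2.1.1 ∧ t.2.1.2 = t.2.2.1 ∧ t.2.2.2 = t.1.1 ∧
        t.1.1 ≠ t.1.2 ∧ t.2.1.1 ≠ t.2.1.2 ∧ t.2.2.1 ≠ t.2.2.2)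
        = ((univ : Finset (Fin n × Fin n × Fin n)).filter fun p =>
            p.1 ≠ p.2.1 ∧ p.2.1 ≠ p.2.2 ∧ p.2.2 ≠ p.1).image
          (fun p => ((p.1, p.2.1), (p.2.1, p.2.2), (p.2.2, p.1))) := by
      ext t
      simp only [mem_image, mem_filter, mem_univ, true_and]
      constructor
      · rintro ⟨h1, h2, h3, h4, h5, h6⟩
        refine ⟨(t.1.1, t.1.2, t.2.1.2), ⟨h4, h1 ▸ h5, ?_⟩, ?_⟩
        · rw [h2]; exact h3 ▸ h6
        · obtain ⟨⟨a, b⟩, ⟨q1, q2⟩, r1, r2⟩ := t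
          simp_all
      · rintro ⟨p, ⟨h1, h2, h3⟩, rfl⟩
        exact ⟨rfl, rfl, rfl, h1, h2, h3⟩
    rw [himg, Finset.card_image_of_injective _ (by
      rintro ⟨a, b, c⟩ ⟨a', b', c'⟩ h
      simp only [Prod.mk.injEq] at h
      obtain ⟨⟨h1, h2⟩, ⟨-, h3⟩, -⟩ := h
      simp [h1, h2, h3])]
    exact count3 n
  · intro A₁ A₂ A₃ _ _ _
    constructor
    · -- first inequality: inject the filtered edge set into the triple set
      refine le_trans ?_ (cs_bound n A₁ A₂ A₃)
      have hle : ((Finset.univ.filter fun t :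
            (Fin n × Fin n) × (Fin n × Fin n) × (Fin n × Fin n) =>
          t.1.2 = t.2.1.1 ∧ t.2.1.2 = t.2.2.1 ∧ t.2.2.2 = t.1.1 ∧
          t.1.1 ≠ t.1.2 ∧ t.2.1.1 ≠ t.2.1.2 ∧ t.2.2.1 ≠ t.2.2.2).filter
            fun t => t.1 ∈ A₁ ∧ t.2.1 ∈ A₂ ∧ t.2.2 ∈ A₃).card
          ≤ (univ.filter fun p : Fin n × Fin n × Fin n =>
              (p.1, p.2.1) ∈ A₁ ∧ (p.2.1, p.2.2) ∈ A₂ ∧ (p.2.2, p.1) ∈ A₃).card := by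
        refine Finset.card_le_card_of_injOn
          (fun t => (t.1.1, t.1.2, t.2.1.2)) ?_ ?_
        · intro t ht
          simp only [mem_coe, mem_filter, mem_univ, true_and] at ht ⊢
          obtain ⟨⟨h1, h2, h3, -, -, -⟩, m1, m2, m3⟩ := ht
          refine ⟨by simpa using m1, ?_, ?_⟩
          · have : (t.1.2, t.2.1.2) = t.2.1 := by rw [h1]
            rw [this]; exact m2
          · have : (t.2.1.2, t.1.1) = t.2.2 := by rw [h2, ← h3]
            rw [this]; exact m3
        · intro t ht t' ht' h
          simp only [mem_coe, mem_filter, mem_univ, true_and] at ht ht'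
          obtain ⟨⟨h1, h2, h3, -⟩, -⟩ := ht
          obtain ⟨⟨h1', h2', h3', -⟩, -⟩ := ht'
          simp only [Prod.mk.injEq] at h
          obtain ⟨ha, hb, hc⟩ := h
          obtain ⟨⟨a, b⟩, ⟨q1, q2⟩, r1, r2⟩ := t
          obtain ⟨⟨a', b'⟩, ⟨q1', q2'⟩, r1', r2'⟩ := t'
          simp_all
      exact_mod_cast Nat.cast_le.mpr hle
    · -- second inequality
      set M := max (max A₁.card A₂.card) A₃.card with hM
      have h1 : (A₁.card : ℝ) ≤ (M : ℝ) := by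
        exact_mod_cast le_trans (le_max_left _ _) (le_max_left _ _)
      have h2 : (A₂.card : ℝ) ≤ (M : ℝ) := by
        exact_mod_cast le_trans (le_max_right _ _) (le_max_left _ _)
      have h3 : (A₃.card : ℝ) ≤ (M : ℝ) := by
        exact_mod_cast le_max_right _ _
      have hM0 : (0:ℝ) ≤ (M : ℝ) := Nat.cast_nonneg _
      have hprod : (A₁.card : ℝ) * (A₂.card : ℝ) * (A₃.card : ℝ) ≤ (M : ℝ) ^ (3:ℕ) := by
        calc (A₁.card : ℝ) * (A₂.card : ℝ) * (A₃.card : ℝ)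
            ≤ (M : ℝ) * (M : ℝ) * (M : ℝ) := by
              refine mul_le_mul (mul_le_mul h1 h2 (by positivity) hM0) h3 (by positivity)
                (by positivity)
          _ = (M : ℝ) ^ (3:ℕ) := by ring
      calc Real.sqrt ((A₁.card : ℝ) * (A₂.card : ℝ) * (A₃.card : ℝ))
          ≤ Real.sqrt ((M : ℝ) ^ (3:ℕ)) := Real.sqrt_le_sqrt hprod
        _ = (M : ℝ) ^ (3 / 2 : ℝ) := by
            rw [Real.sqrt_eq_rpow, ← Real.rpow_natCast (M : ℝ) 3, ← Real.rpow_mul hM0]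
            norm_num
end
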